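/- arXiv:2505.12918 — 2 statements merged into one kernel-verified Lean document; each statement's English description precedes it below -/
import Mathlib

section
/- Every A-symmetry in the group Out N is an involution: if t ∈ Out N is an A-symmetry, then t² = 1. -/
/-!
Setting: `X` is an infinite set, `F` the free group on `X`, and
`N X = F/γ₃(F)` the free nilpotent group of class two on `X`.
-/

namespace FreeNilp

/-- The free nilpotent group of class two on `X`:  `F/γ₃(F)`, where
`γ₃(F) = [[F,F],F]` is the third term of the lower central series of `F`. -/
abbrev N (X : Type*) := FreeGroup X ⧸ (⊤ : Subgroup (FreeGroup X)).lowerCentralSeries 2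

/-- The image in `N X` of the generator `x ∈ X`. -/
def xb {X : Type*} (x : X) : N X := QuotientGroup.mk (FreeGroup.of x)

/-- The group of inner automorphisms `Inn G`, as a subgroup of `MulAut G`;
`MulAut.conj z` is the inner automorphism `τ_z : a ↦ z a z⁻¹`. -/
def Inn (G : Type*) [Group G] : Subgroup (MulAut G) := (MulAut.conj (G := G)).range

instance Inn.normal (G : Type*) [Group G] : (Inn G).Normal := by
  constructor
  rintro m ⟨z, rfl⟩ g
  refine ⟨g z, ?_⟩
  ext a
  simp [MulAut.conj_apply, map_mul, map_inv, mul_assoc]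

/-- The outer automorphism group `Out G = Aut G / Inn G`. -/
abbrev Out (G : Type*) [Group G] := MulAut G ⧸ Inn G

/-- The quotient homomorphism `ĥ : Aut G → Out G`. -/
def hhat (G : Type*) [Group G] : MulAut G →* Out G := QuotientGroup.mk' (Inn G)

/-- IA-automorphisms: automorphisms inducing the identity on the abelianization. -/
def IA {G : Type*} [Group G] (α : MulAut G) : Prop :=
  ∀ g : G, Abelianization.of (α g) = Abelianization.of g

/-- A-symmetries in `Aut G`: automorphisms inducing the inversion automorphism
`-id : a ↦ a⁻¹` of the abelianization. -/
def ASym {G : Type*} [Group G] (θ : MulAut G) : Prop :=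
  ∀ g : G, Abelianization.of (θ g) = (Abelianization.of g)⁻¹

/-- A-symmetries in `Out G`: elements induced by A-symmetries of `Aut G`
(equivalently, inducing inversion on the abelianization). -/
def ASymO {G : Type*} [Group G] (t : Out G) : Prop :=
  ∃ θ : MulAut G, hhat G θ = t ∧ ASym θ

/-- The endomorphism of the abelianization induced by an automorphism of `G`. -/
def abMap {G : Type*} [Group G] (σ : MulAut G) : Abelianization G →* Abelianization G :=
  Abelianization.map σ.toMonoidHom

/-- `S` is a free generating set (a "ℤ-basis", written multiplicatively) of the abelian
group `H`:  `S` generates `H`, and every `ℤ`-valued function on `S` extends to a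
homomorphism `H → ℤ` (the universal property of a free abelian group with basis `S`). -/
def IsFreeAbelianBasisOf {G : Type*} [Group G] (S : Set G) (H : Subgroup G) : Prop :=
  Subgroup.closure S = H ∧
    ∀ g : G → ℤ, ∃ φ : H →* Multiplicative ℤ,
      ∀ s, s ∈ S → ∀ h : s ∈ H, φ ⟨s, h⟩ = Multiplicative.ofAdd (g s)

/-- `σ : Aut (N X)` induces an extremal involution of the abelianization `A`:
for some free generating set `{a} ∪ C` of `A` the induced map sends `a` to `a⁻¹`
and fixes `C` pointwise. -/
def AExtremal {G : Type*} [Group G] (σ : MulAut G) : Prop :=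
  ∃ (a : Abelianization G) (C : Set (Abelianization G)),
    a ∉ C ∧ IsFreeAbelianBasisOf (insert a C) ⊤ ∧
      abMap σ a = a⁻¹ ∧ ∀ c ∈ C, abMap σ c = c

/-- A basis (free generating set) of `N X`: the image of the canonical generating set
`{x̄ : x ∈ X}` under an automorphism of `N X`. -/
def IsBasisN {X : Type*} (B : Set (N X)) : Prop :=
  ∃ e : MulAut (N X), B = ⇑e '' Set.range (xb : X → N X)

/-- Extremal involutions in `Aut (N X)`: automorphisms inverting one element of some
basis of `N X` and fixing all the other elements of that basis. -/
def IsExtremalAut {X : Type*} (ψ : MulAut (N X)) : Prop :=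
  ∃ B : Set (N X), IsBasisN B ∧
    ∃ b₀ ∈ B, ψ b₀ = b₀⁻¹ ∧ ∀ b ∈ B, b ≠ b₀ → ψ b = b

/-- The subgroup `G_b = {s ∈ Out (N X) : s̄(b̄N') = b̄N'}` of `Out (N X)`, as a set:
outer automorphisms whose induced automorphism of the abelianization fixes the image
of the generator `b`. -/
def Gb {X : Type*} (b : X) : Set (Out (N X)) :=
  {s | ∀ σ : MulAut (N X), hhat (N X) σ = s →
    Abelianization.of (σ (xb b)) = Abelianization.of (xb b)}

end FreeNilp


/-!
If `θ` induces inversion on the abelianization, then `θ g * g` lies in `[G, G]`, which is central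
when `G` has class two. Writing `θ a = (θ a * a) * a⁻¹` gives `θ ⁅a, b⁆ = ⁅a⁻¹, b⁻¹⁆ = ⁅a, b⁆`, so
`θ` fixes `[G, G]` pointwise. Applying `θ` to the central element `θ g * g` then gives
`θ (θ g) * θ g = θ g * g = g * θ g`, so `θ ^ 2 = 1` already in `Aut G`.
-/

open Subgroup
open scoped commutatorElement

section ClassTwo

variable {G : Type*} [Group G]

theorem commutatorElement_mul_left_of_mem_center {z : G} (hz : z ∈ center G) (a b : G) :
    ⁅z * a, b⁆ = ⁅a, b⁆ := by
  rw [commutatorElement_mul_left_eq_conj_mul, (mem_center_iff.mp hz _).symm,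
    commutatorElement_eq_one_iff_mul_comm.mpr (mem_center_iff.mp hz b).symm]
  group

theorem commutatorElement_mul_right_of_mem_center {z : G} (hz : z ∈ center G) (a b : G) :
    ⁅a, z * b⁆ = ⁅a, b⁆ := by
  rw [← commutatorElement_inv, commutatorElement_mul_left_of_mem_center hz, commutatorElement_inv]

theorem commutatorElement_inv_inv_of_commutator_le_center (hG : commutator G ≤ center G)
    (a b : G) : ⁅a⁻¹, b⁻¹⁆ = ⁅a, b⁆ := by
  have conj_commutatorElement (g p q : G) : g⁻¹ * ⁅p, q⁆ * g = ⁅p, q⁆ := by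
    rw [mul_assoc, ← mem_center_iff.mp (hG (commutator_mem_commutator (mem_top p) (mem_top q))),
      inv_mul_cancel_left]
  rw [commutatorElement_inv_left, conj_commutatorElement, commutatorElement_inv_left,
    conj_commutatorElement]

namespace FreeNilp.ASym

variable {θ : MulAut G}

theorem apply_mul_self_mem_commutator (hθ : ASym θ) (g : G) : θ g * g ∈ commutator G := by
  rw [← Abelianization.ker_of, MonoidHom.mem_ker, map_mul, hθ g, inv_mul_cancel]

theorem apply_commutatorElement (hG : commutator G ≤ center G) (hθ : ASym θ) (a b : G) :
    θ ⁅a, b⁆ = ⁅a, b⁆ := by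
  calc θ ⁅a, b⁆ = ⁅θ a * a * a⁻¹, θ b * b * b⁻¹⁆ := by
        rw [map_commutatorElement, mul_inv_cancel_right, mul_inv_cancel_right]
    _ = ⁅a⁻¹, b⁻¹⁆ := by
        rw [commutatorElement_mul_left_of_mem_center (hG (hθ.apply_mul_self_mem_commutator a)),
          commutatorElement_mul_right_of_mem_center (hG (hθ.apply_mul_self_mem_commutator b))]
    _ = ⁅a, b⁆ := commutatorElement_inv_inv_of_commutator_le_center hG a b

theorem apply_of_mem_commutator (hG : commutator G ≤ center G) (hθ : ASym θ) {w : G}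
    (hw : w ∈ commutator G) : θ w = w := by
  have : commutator G ≤ θ.toMonoidHom.eqLocus (MonoidHom.id G) := by
    rw [commutator_def, commutator_le]
    exact fun a _ b _ => hθ.apply_commutatorElement hG a b
  exact this hw

theorem sq_eq_one (hG : commutator G ≤ center G) (hθ : ASym θ) : θ ^ 2 = 1 := by
  ext g
  have hu := hθ.apply_mul_self_mem_commutator g
  have fixed : θ (θ g) * θ g = θ g * g := by
    rw [← map_mul, hθ.apply_of_mem_commutator hG hu]
  have comm : θ g * g = g * θ g := by
    refine mul_right_cancel (b := g) ?_
    rw [mul_assoc g, mem_center_iff.mp (hG hu) g]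
  exact mul_right_cancel (fixed.trans comm)

end FreeNilp.ASym

end ClassTwo

theorem lowerCentralSeries_quotient_lowerCentralSeries_eq_bot (G : Type*) [Group G] (n : ℕ) :
    (⊤ : Subgroup (G ⧸ (⊤ : Subgroup G).lowerCentralSeries n)).lowerCentralSeries n = ⊥ := by
  rw [← map_top_of_surjective _ (QuotientGroup.mk'_surjective _), ← map_lowerCentralSeries,
    QuotientGroup.map_mk'_self]

namespace FreeNilp

theorem commutator_N_le_center (X : Type*) : commutator (N X) ≤ center (N X) :=
  commutator_top_right_eq_bot_iff_le_center.mp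
    (lowerCentralSeries_quotient_lowerCentralSeries_eq_bot (FreeGroup X) 2)

end FreeNilp

open FreeNilp

theorem stmt6_general (X : Type*) (t : Out (N X)) (ht : ASymO t) : t ^ 2 = 1 := by
  obtain ⟨θ, rfl, hθ⟩ := ht
  rw [← map_pow, hθ.sq_eq_one (commutator_N_le_center X), map_one]

/-- Every A-symmetry in the group `Out N` is an involution. -/
theorem stmt6 (X : Type*) [Infinite X] (t : Out (N X)) (ht : ASymO t) : t ^ 2 = 1 :=
  stmt6_general X t ht
end

section
/- Let t ∈ Out N be an A-symmetry such that for every permutation ρ of X, writing π_ρ for the automorphism of N with π_ρ(x̄) = ρ(x)‾ for all x ∈ X, one has ĥ(π_ρ) t ĥ(π_ρ)⁻¹ t⁻¹ ∈ ĥ(K²), where K² = {α² : α ∈ IA(N)}. Then t is a symmetry in Out N: there exist an automorphism θ of N and a basis B of N such that θ(b) = b⁻¹ for every b ∈ B and ĥ(θ) = t. -/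
open FreeNilp

/-!
Write `t = ĥ(θ)` with `θ(x̄) = x̄⁻¹ c_x`, `c_x ∈ N'`, and read `N' ≅ Λ²A` through the coordinates
`commCoord u v` (the coefficient of `[ū, v̄]`). Conjugating by the permutational automorphism of a
transposition and discarding the squares `α²`, `α ∈ IA(N)`, the hypothesis says that the
coordinates of the `c_x` are permuted compatibly with the transposition modulo `2`, up to the
coordinates of one commutator `[x̄, z]`. Since `X` is infinite and each `c_x` has finite support,
a fresh point can always be swapped in; this shows that modulo `2` the only odd coordinates of
`c_x` are those of `[x̄, z]⁻¹` for a single `z` with finitely many odd exponent sums. Hence for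
`θ' = θ ∘ τ_{z⁻¹}`, still representing `t`, every `c_x` is a square `w_x²` in `N'`, and `θ'`
inverts the basis `{x̄ w_x⁻¹}`.
-/

open scoped commutatorElement IsMulCommutative

open Subgroup

namespace FreeNilp

/-- The integral Heisenberg group; `(a, b, c)` stands for `[[1, a, c], [0, 1, b], [0, 0, 1]]`. -/
@[ext] structure Heis where
  a : ℤ
  b : ℤ
  c : ℤ

namespace Heis

instance : Mul Heis := ⟨fun g h => ⟨g.a + h.a, g.b + h.b, g.c + h.c + g.a * h.b⟩⟩
instance : One Heis := ⟨⟨0, 0, 0⟩⟩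
instance : Inv Heis := ⟨fun g => ⟨-g.a, -g.b, -g.c + g.a * g.b⟩⟩

@[simp] lemma mul_a (g h : Heis) : (g * h).a = g.a + h.a := rfl
@[simp] lemma mul_b (g h : Heis) : (g * h).b = g.b + h.b := rfl
@[simp] lemma mul_c (g h : Heis) : (g * h).c = g.c + h.c + g.a * h.b := rfl
@[simp] lemma inv_a (g : Heis) : g⁻¹.a = -g.a := rfl
@[simp] lemma inv_b (g : Heis) : g⁻¹.b = -g.b := rfl
@[simp] lemma inv_c (g : Heis) : g⁻¹.c = -g.c + g.a * g.b := rfl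
@[simp] lemma one_a : (1 : Heis).a = 0 := rfl
@[simp] lemma one_b : (1 : Heis).b = 0 := rfl
@[simp] lemma one_c : (1 : Heis).c = 0 := rfl

instance : Group Heis where
  mul_assoc g h k := by ext <;> simp <;> ring
  one_mul g := by ext <;> simp
  mul_one g := by ext <;> simp
  inv_mul_cancel g := by ext <;> simp

lemma commutatorElement_eq (g h : Heis) : ⁅g, h⁆ = ⟨0, 0, g.a * h.b - h.a * g.b⟩ := by
  ext <;> simp [commutatorElement_def]; ring

lemma commutatorElement_commutatorElement (g h k : Heis) : ⁅⁅g, h⁆, k⁆ = 1 := by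
  rw [commutatorElement_eq, commutatorElement_eq]
  ext <;> simp

def aHom : Heis →* Multiplicative ℤ where
  toFun g := .ofAdd g.a
  map_one' := rfl
  map_mul' _ _ := rfl

def bHom : Heis →* Multiplicative ℤ where
  toFun g := .ofAdd g.b
  map_one' := rfl
  map_mul' _ _ := rfl

end Heis

lemma map_eq_self_of_map_commutatorElement {G : Type*} [Group G] {σ : G →* G}
    (hσ : ∀ g k : G, σ ⁅g, k⁆ = ⁅g, k⁆) {n : G} (hn : n ∈ commutator G) : σ n = n := by
  have : commutator G ≤ σ.eqLocus (MonoidHom.id G) := by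
    rw [commutator_def, commutator_le]
    exact fun g _ k _ => hσ g k
  exact this hn

section ClassTwo

variable {M : Type*} [Group M] (hM : ∀ g h k : M, ⁅⁅g, h⁆, k⁆ = 1)
include hM

lemma commute_of_mem_commutator {n : M} (hn : n ∈ commutator M) (g : M) : Commute g n := by
  have hle : commutator M ≤ center M := by
    rw [commutator_def, commutator_le]
    exact fun g _ h _ => mem_center_iff.mpr fun k =>
      (commutatorElement_eq_one_iff_commute.mp (hM g h k)).symm.eq
  exact mem_center_iff.mp (hle hn) g

lemma commutatorElement_mul_left (g₁ g₂ h : M) : ⁅g₁ * g₂, h⁆ = ⁅g₁, h⁆ * ⁅g₂, h⁆ := by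
  have hc := commute_of_mem_commutator hM (commutator_mem_commutator (mem_top g₂) (mem_top h))
  calc ⁅g₁ * g₂, h⁆ = g₁ * ⁅g₂, h⁆ * g₁⁻¹ * ⁅g₁, h⁆ := by simp only [commutatorElement_def]; group
    _ = ⁅g₁, h⁆ * ⁅g₂, h⁆ := by
      rw [(hc g₁).eq, mul_inv_cancel_right, (hc ⁅g₁, h⁆).eq]

lemma commutatorElement_mul_right (g h₁ h₂ : M) : ⁅g, h₁ * h₂⁆ = ⁅g, h₁⁆ * ⁅g, h₂⁆ := by
  have hc := commute_of_mem_commutator hM (commutator_mem_commutator (mem_top g) (mem_top h₂))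
  calc ⁅g, h₁ * h₂⁆ = ⁅g, h₁⁆ * (h₁ * ⁅g, h₂⁆ * h₁⁻¹) := by simp only [commutatorElement_def]; group
    _ = ⁅g, h₁⁆ * ⁅g, h₂⁆ := by rw [(hc h₁).eq, mul_inv_cancel_right]

lemma commutatorElement_inv_left (g h : M) : ⁅g⁻¹, h⁆ = ⁅g, h⁆⁻¹ := by
  rw [eq_inv_iff_mul_eq_one, ← commutatorElement_mul_left hM, inv_mul_cancel,
    commutatorElement_one_left]

lemma commutatorElement_inv_right (g h : M) : ⁅g, h⁻¹⁆ = ⁅g, h⁆⁻¹ := by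
  rw [eq_inv_iff_mul_eq_one, ← commutatorElement_mul_right hM, inv_mul_cancel,
    commutatorElement_one_right]

lemma commutatorElement_inv_inv (g h : M) : ⁅g⁻¹, h⁻¹⁆ = ⁅g, h⁆ := by
  rw [commutatorElement_inv_left hM, commutatorElement_inv_right hM, inv_inv]

lemma commutator_le_of_closure_eq_top {s : Set M} (hs : closure s = ⊤) {H : Subgroup M}
    (h : ∀ a ∈ s, ∀ b ∈ s, ⁅a, b⁆ ∈ H) : commutator M ≤ H := by
  let right (g : M) : M →* M :=
    { toFun := fun k => ⁅g, k⁆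
      map_one' := commutatorElement_one_right g
      map_mul' := commutatorElement_mul_right hM g }
  let left (k : M) : M →* M :=
    { toFun := fun g => ⁅g, k⁆
      map_one' := commutatorElement_one_left k
      map_mul' := fun g₁ g₂ => commutatorElement_mul_left hM g₁ g₂ k }
  have hgen : ∀ a ∈ s, ∀ k : M, ⁅a, k⁆ ∈ H := fun a ha k => by
    have : closure s ≤ H.comap (right a) := (closure_le _).mpr fun b hb => h a ha b hb
    exact this (hs ▸ mem_top k)
  rw [commutator_def, commutator_le]
  intro g _ k _
  have : closure s ≤ H.comap (left k) := (closure_le _).mpr fun a ha => hgen a ha k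
  exact this (hs ▸ mem_top g)

lemma commutatorElement_mul_mul_of_mem {c d : M} (hc : c ∈ commutator M)
    (hd : d ∈ commutator M) (g k : M) : ⁅g * c, k * d⁆ = ⁅g, k⁆ := by
  rw [commutatorElement_mul_left hM, commutatorElement_mul_right hM,
    commutatorElement_eq_one_iff_commute.mpr (commute_of_mem_commutator hM hd g),
    commutatorElement_eq_one_iff_commute.mpr (commute_of_mem_commutator hM hc _).symm,
    mul_one, mul_one]

lemma map_eq_self_of_forall_inv_mul_mem {σ : M →* M} (hσ : ∀ g, g⁻¹ * σ g ∈ commutator M)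
    {n : M} (hn : n ∈ commutator M) : σ n = n :=
  map_eq_self_of_map_commutatorElement (fun g k => by
    have := commutatorElement_mul_mul_of_mem hM (hσ g) (hσ k) g k
    rwa [mul_inv_cancel_left, mul_inv_cancel_left, ← map_commutatorElement] at this) hn

lemma map_eq_self_of_forall_mul_mem {σ : M →* M} (hσ : ∀ g, g * σ g ∈ commutator M)
    {n : M} (hn : n ∈ commutator M) : σ n = n :=
  map_eq_self_of_map_commutatorElement (fun g k => by
    have := commutatorElement_mul_mul_of_mem hM (hσ g) (hσ k) g⁻¹ k⁻¹
    rwa [inv_mul_cancel_left, inv_mul_cancel_left, ← map_commutatorElement,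
      commutatorElement_inv_inv hM] at this) hn

end ClassTwo

variable {X : Type*}

namespace N

lemma commutatorElement_commutatorElement (g h k : N X) : ⁅⁅g, h⁆, k⁆ = 1 := by
  obtain ⟨g, rfl⟩ := QuotientGroup.mk_surjective g
  obtain ⟨h, rfl⟩ := QuotientGroup.mk_surjective h
  obtain ⟨k, rfl⟩ := QuotientGroup.mk_surjective k
  rw [← QuotientGroup.mk'_apply, ← QuotientGroup.mk'_apply, ← QuotientGroup.mk'_apply,
    ← map_commutatorElement, ← map_commutatorElement, QuotientGroup.mk'_apply,
    QuotientGroup.eq_one_iff]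
  exact commutator_mem_commutator (commutator_mem_commutator (mem_top g) (mem_top h)) (mem_top k)

lemma closure_range_xb : closure (Set.range (xb : X → N X)) = ⊤ := by
  rw [show Set.range (xb : X → N X) = QuotientGroup.mk' _ '' Set.range FreeGroup.of by
      rw [← Set.range_comp]; rfl,
    ← MonoidHom.map_closure, FreeGroup.closure_range_of, ← MonoidHom.range_eq_map,
    MonoidHom.range_eq_top_of_surjective _ (QuotientGroup.mk'_surjective _)]

lemma hom_ext {M : Type*} [Group M] {f g : N X →* M} (h : ∀ x, f (xb x) = g (xb x)) : f = g :=
  QuotientGroup.monoidHom_ext _ (FreeGroup.ext_hom _ _ h)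

def lift {M : Type*} [Group M] (hM : ∀ g h k : M, ⁅⁅g, h⁆, k⁆ = 1) (v : X → M) : N X →* M :=
  QuotientGroup.lift _ (FreeGroup.lift v) <| by
    set f := FreeGroup.lift v
    have hf : commutator (FreeGroup X) ≤ (commutator M).comap f := by
      rw [commutator_def, commutator_le]
      intro a _ b _
      rw [mem_comap, map_commutatorElement]
      exact commutator_mem_commutator (mem_top _) (mem_top _)
    have : (⊤ : Subgroup (FreeGroup X)).lowerCentralSeries 2 ≤ f.ker := by
      rw [Subgroup.lowerCentralSeries_succ, commutator_le]
      intro p hp q _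
      rw [MonoidHom.mem_ker, map_commutatorElement, commutatorElement_eq_one_iff_commute]
      exact (commute_of_mem_commutator hM (hf hp) _).symm
    exact fun w hw => this hw

@[simp] lemma lift_xb {M : Type*} [Group M] (hM : ∀ g h k : M, ⁅⁅g, h⁆, k⁆ = 1) (v : X → M)
    (x : X) : lift hM v (xb x) = v x :=
  FreeGroup.lift_apply_of

lemma exists_mulAut_apply_xb (v w : X → N X)
    (hwv : ∀ x, lift commutatorElement_commutatorElement w (v x) = xb x)
    (hvw : ∀ x, lift commutatorElement_commutatorElement v (w x) = xb x) :
    ∃ π : MulAut (N X), ∀ x, π (xb x) = v x :=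
  ⟨MonoidHom.toMulEquiv (lift commutatorElement_commutatorElement v)
    (lift commutatorElement_commutatorElement w)
    (hom_ext fun x => by rw [MonoidHom.comp_apply, lift_xb]; exact hwv x)
    (hom_ext fun x => by rw [MonoidHom.comp_apply, lift_xb]; exact hvw x),
    lift_xb commutatorElement_commutatorElement v⟩

lemma exists_mulAut_apply_xb_perm (ρ : Equiv.Perm X) :
    ∃ π : MulAut (N X), ∀ x, π (xb x) = xb (ρ x) :=
  exists_mulAut_apply_xb _ (fun x => xb (ρ.symm x))
    (fun x => by rw [lift_xb, Equiv.symm_apply_apply])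
    (fun x => by rw [lift_xb, Equiv.apply_symm_apply])

end N

section Automorphisms

variable {G : Type*} [Group G]

lemma of_eq_one_iff_mem_commutator {g : G} : Abelianization.of g = 1 ↔ g ∈ commutator G := by
  rw [← Abelianization.ker_of, MonoidHom.mem_ker]

lemma IA.inv_mul_mem_commutator {α : MulAut G} (hα : IA α) (g : G) :
    g⁻¹ * α g ∈ commutator G := by
  rw [← of_eq_one_iff_mem_commutator, map_mul, hα, map_inv, inv_mul_cancel]

lemma ASym.mul_mem_commutator {θ : MulAut G} (hθ : ASym θ) (g : G) :
    g * θ g ∈ commutator G := by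
  rw [← of_eq_one_iff_mem_commutator, map_mul, hθ, mul_inv_cancel]

lemma ASym.mul_conj {θ : MulAut G} (hθ : ASym θ) (z : G) : ASym (θ * MulAut.conj z) := by
  intro g
  rw [MulAut.mul_apply, hθ, MulAut.conj_apply, map_mul, map_mul, map_inv, mul_inv_cancel_comm]

lemma hhat_mul_conj (θ : MulAut G) (z : G) : hhat G (θ * MulAut.conj z) = hhat G θ := by
  rw [map_mul, mul_eq_left]
  exact (QuotientGroup.eq_one_iff _).mpr ⟨z, rfl⟩

variable (hG : ∀ g h k : G, ⁅⁅g, h⁆, k⁆ = 1)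
include hG

lemma IA.apply_eq_self {α : MulAut G} (hα : IA α) {n : G} (hn : n ∈ commutator G) : α n = n :=
  map_eq_self_of_forall_inv_mul_mem hG (σ := α.toMonoidHom) hα.inv_mul_mem_commutator hn

lemma ASym.apply_eq_self {θ : MulAut G} (hθ : ASym θ) {n : G} (hn : n ∈ commutator G) :
    θ n = n :=
  map_eq_self_of_forall_mul_mem hG (σ := θ.toMonoidHom) hθ.mul_mem_commutator hn

lemma IA.sq_apply {α : MulAut G} (hα : IA α) (g : G) :
    ∃ d ∈ commutator G, (α ^ 2) g = g * (d * d) := by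
  refine ⟨g⁻¹ * α g, hα.inv_mul_mem_commutator g, ?_⟩
  rw [pow_two, MulAut.mul_apply, ← mul_assoc, mul_inv_cancel_left,
    ← hα.apply_eq_self hG (hα.inv_mul_mem_commutator g), ← map_mul, mul_inv_cancel_left]

end Automorphisms

namespace N

lemma inv_mul_lift_apply_mem_commutator {v : X → N X}
    (hv : ∀ x, (xb x)⁻¹ * v x ∈ commutator (N X)) (g : N X) :
    g⁻¹ * lift commutatorElement_commutatorElement v g ∈ commutator (N X) := by
  have : Abelianization.of.comp (lift commutatorElement_commutatorElement v) =
      Abelianization.of := hom_ext fun x => by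
    rw [MonoidHom.comp_apply, lift_xb, eq_comm, ← inv_mul_eq_one, ← map_inv, ← map_mul,
      of_eq_one_iff_mem_commutator]
    exact hv x
  rw [← of_eq_one_iff_mem_commutator, map_mul, map_inv, ← MonoidHom.comp_apply, this,
    inv_mul_cancel]

lemma exists_mulAut_apply_xb_mul {c : X → N X} (hc : ∀ x, c x ∈ commutator (N X)) :
    ∃ g : MulAut (N X), ∀ x, g (xb x) = xb x * c x := by
  have hfix : ∀ (v : X → N X), (∀ x, (xb x)⁻¹ * v x ∈ commutator (N X)) → ∀ x,
      lift commutatorElement_commutatorElement v (c x) = c x := fun v hv x =>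
    map_eq_self_of_forall_inv_mul_mem commutatorElement_commutatorElement
      (inv_mul_lift_apply_mem_commutator hv) (hc x)
  refine exists_mulAut_apply_xb _ (fun x => xb x * (c x)⁻¹) (fun x => ?_) (fun x => ?_)
  · rw [map_mul, lift_xb, hfix _ (fun y => by simpa using inv_mem (hc y)), inv_mul_cancel_right]
  · rw [map_mul, map_inv, lift_xb, hfix _ (fun y => by simpa using hc y), mul_inv_cancel_right]

end N

def inversionDefect (θ : MulAut (N X)) (x : X) : N X := xb x * θ (xb x)

lemma ASym.inversionDefect_mem {θ : MulAut (N X)} (hθ : ASym θ) (x : X) :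
    inversionDefect θ x ∈ commutator (N X) :=
  hθ.mul_mem_commutator (xb x)

lemma apply_xb_eq_inv_mul_inversionDefect (θ : MulAut (N X)) (x : X) :
    θ (xb x) = (xb x)⁻¹ * inversionDefect θ x := by
  rw [inversionDefect, inv_mul_cancel_left]

lemma ASym.inversionDefect_mul_conj {θ : MulAut (N X)} (hθ : ASym θ) (z : N X) (x : X) :
    inversionDefect (θ * MulAut.conj z) x = inversionDefect θ x * ⁅(xb x)⁻¹, z⁆ := by
  have hconj : z * xb x * z⁻¹ = xb x * ⁅(xb x)⁻¹, z⁆ := by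
    rw [commutatorElement_def]; group
  rw [inversionDefect, inversionDefect, MulAut.mul_apply, MulAut.conj_apply, hconj, map_mul,
    hθ.apply_eq_self N.commutatorElement_commutatorElement
      (commutator_mem_commutator (mem_top _) (mem_top _)), mul_assoc]

lemma ASym.exists_map_inversionDefect_eq {θ : MulAut (N X)} (hθ : ASym θ) {ρ : Equiv.Perm X}
    {π : MulAut (N X)} (hπ : ∀ x, π (xb x) = xb (ρ x)) {α : MulAut (N X)} (hα : IA α)
    (h : hhat _ π * hhat _ θ * (hhat _ π)⁻¹ * (hhat _ θ)⁻¹ = hhat _ (α ^ 2)) :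
    ∃ z : N X, ∀ x, ∃ d ∈ commutator (N X),
      π (inversionDefect θ (ρ.symm x)) = ⁅xb x, z⁆ * inversionDefect θ x * (d * d) := by
  simp only [← map_inv, ← map_mul, hhat] at h
  obtain ⟨_, ⟨z, rfl⟩, hz⟩ := (QuotientGroup.mk'_eq_mk' _).mp h
  refine ⟨z⁻¹, fun x => ?_⟩
  obtain ⟨d, hd, hαd⟩ := hα.sq_apply N.commutatorElement_commutatorElement
    (MulAut.conj z⁻¹ (θ (xb x)))
  refine ⟨d, hd, ?_⟩
  have key := congrArg (fun f : MulAut (N X) => f (MulAut.conj z⁻¹ (θ (xb x)))) hz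
  have hπinv : π⁻¹ (xb x) = xb (ρ.symm x) := by
    rw [MulAut.inv_def, MulEquiv.symm_apply_eq, hπ, Equiv.apply_symm_apply]
  have hc := commute_of_mem_commutator N.commutatorElement_commutatorElement
    (hθ.inversionDefect_mem x) z
  have hzz : MulAut.conj z (MulAut.conj z⁻¹ (θ (xb x))) = θ (xb x) := by
    rw [MulAut.conj_apply, MulAut.conj_apply]; group
  rw [MulAut.mul_apply, MulAut.mul_apply, MulAut.mul_apply, MulAut.mul_apply, hzz,
    MulAut.inv_apply_self, hπinv, hαd, apply_xb_eq_inv_mul_inversionDefect θ (ρ.symm x),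
    map_mul, map_inv, hπ, Equiv.apply_symm_apply, MulAut.conj_apply,
    apply_xb_eq_inv_mul_inversionDefect θ x, inv_inv] at key
  calc π (inversionDefect θ (ρ.symm x))
      = xb x * ((xb x)⁻¹ * π (inversionDefect θ (ρ.symm x))) := by group
    _ = xb x * z⁻¹ * (xb x)⁻¹ * (z * inversionDefect θ x) * (d * d) := by
      rw [key, hc.eq]; group
    _ = ⁅xb x, z⁻¹⁆ * inversionDefect θ x * (d * d) := by
      rw [commutatorElement_def]; group

lemma ASym.exists_basis_of_inversionDefect_eq_mul_self {θ : MulAut (N X)} (hθ : ASym θ)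
    {w : X → N X} (hw : ∀ x, w x ∈ commutator (N X)) (hsq : ∀ x, inversionDefect θ x = w x * w x) :
    ∃ B : Set (N X), IsBasisN B ∧ ∀ b ∈ B, θ b = b⁻¹ := by
  obtain ⟨g, hg⟩ := N.exists_mulAut_apply_xb_mul fun x => inv_mem (hw x)
  refine ⟨g '' Set.range xb, ⟨g, rfl⟩, ?_⟩
  rintro _ ⟨_, ⟨x, rfl⟩, rfl⟩
  have hc := commute_of_mem_commutator N.commutatorElement_commutatorElement (hw x) (xb x)⁻¹
  rw [hg, map_mul, map_inv, hθ.apply_eq_self N.commutatorElement_commutatorElement (hw x),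
    apply_xb_eq_inv_mul_inversionDefect, hsq, mul_inv_rev, inv_inv, ← hc.eq]
  group

instance : IsMulCommutative (commutator (N X)) :=
  ⟨⟨fun a b => Subtype.ext
    (commute_of_mem_commutator N.commutatorElement_commutatorElement b.2 a).eq⟩⟩

def basicComm (p : X × X) : commutator (N X) :=
  ⟨⁅xb p.1, xb p.2⁆, commutator_mem_commutator (mem_top _) (mem_top _)⟩

def basicProd (μ : (X × X) →₀ ℤ) : commutator (N X) := μ.prod fun p k => basicComm p ^ k

lemma basicProd_add (μ ν : (X × X) →₀ ℤ) : basicProd (μ + ν) = basicProd μ * basicProd ν :=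
  Finsupp.prod_add_index' (fun _ => zpow_zero _) (fun _ => zpow_add _)

lemma basicProd_neg (μ : (X × X) →₀ ℤ) : basicProd (-μ) = (basicProd μ)⁻¹ :=
  Finsupp.prod_neg_index (fun _ => zpow_zero _) |>.trans (by simp [basicProd, zpow_neg])

def orderedBasicProds [LinearOrder X] : Subgroup (N X) where
  carrier := {n | ∃ μ ∈ Finsupp.supported ℤ ℤ {p : X × X | p.1 < p.2}, n = basicProd μ}
  mul_mem' := by
    rintro _ _ ⟨μ, hμ, rfl⟩ ⟨ν, hν, rfl⟩
    exact ⟨μ + ν, add_mem hμ hν, by rw [basicProd_add, Subgroup.coe_mul]⟩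
  one_mem' := ⟨0, zero_mem _, by simp [basicProd]⟩
  inv_mem' := by
    rintro _ ⟨μ, hμ, rfl⟩
    exact ⟨-μ, neg_mem hμ, by rw [basicProd_neg, Subgroup.coe_inv]⟩

lemma commutator_le_orderedBasicProds [LinearOrder X] :
    commutator (N X) ≤ orderedBasicProds := by
  have hlt : ∀ x y : X, x < y → ⁅xb x, xb y⁆ ∈ orderedBasicProds := fun x y hxy =>
    ⟨Finsupp.single (x, y) 1, Finsupp.single_mem_supported ℤ _ hxy, by
      simp [basicProd, basicComm]⟩
  refine commutator_le_of_closure_eq_top N.commutatorElement_commutatorElement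
    N.closure_range_xb ?_
  rintro _ ⟨x, rfl⟩ _ ⟨y, rfl⟩
  rcases lt_trichotomy x y with h | rfl | h
  · exact hlt x y h
  · rw [commutatorElement_self]; exact one_mem _
  · rw [← commutatorElement_inv]; exact inv_mem (hlt y x h)

lemma exists_eq_basicProd [LinearOrder X] {n : N X} (hn : n ∈ commutator (N X)) :
    ∃ μ ∈ Finsupp.supported ℤ ℤ {p : X × X | p.1 < p.2}, n = basicProd μ :=
  commutator_le_orderedBasicProds hn

variable [DecidableEq X]


/-- The homomorphism `N X → Heis` sending `x̄` to `(δ_{xu}, δ_{xv}, 0)`; its `c`-coordinate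
reads off the coefficient of `[ū, v̄]` in the commutator subgroup. -/
def chi (u v : X) : N X →* Heis :=
  N.lift Heis.commutatorElement_commutatorElement
    fun x => ⟨if x = u then 1 else 0, if x = v then 1 else 0, 0⟩

def expSum (v : X) (n : N X) : ℤ := (chi v v n).a

def commCoord (u v : X) (n : N X) : ℤ := (chi u v n).c

@[simp] lemma chi_xb (u v x : X) :
    chi u v (xb x) = ⟨if x = u then 1 else 0, if x = v then 1 else 0, 0⟩ :=
  N.lift_xb _ _ x

lemma chi_a (u v : X) (n : N X) : (chi u v n).a = expSum u n := by
  have : Heis.aHom.comp (chi u v) = Heis.aHom.comp (chi u u) := N.hom_ext fun x => by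
    simp [Heis.aHom]
  exact congrArg Multiplicative.toAdd (DFunLike.congr_fun this n)

lemma chi_b (u v : X) (n : N X) : (chi u v n).b = expSum v n := by
  have : Heis.bHom.comp (chi u v) = Heis.aHom.comp (chi v v) := N.hom_ext fun x => by
    simp [Heis.aHom, Heis.bHom]
  exact congrArg Multiplicative.toAdd (DFunLike.congr_fun this n)

@[simp] lemma expSum_xb (v x : X) : expSum v (xb x) = if x = v then 1 else 0 := by
  simp [expSum]

@[simp] lemma expSum_mul (v : X) (g h : N X) : expSum v (g * h) = expSum v g + expSum v h := by
  simp [expSum]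

lemma expSum_eq_zero_of_mem {n : N X} (hn : n ∈ commutator (N X)) (v : X) : expSum v n = 0 :=
  congrArg Multiplicative.toAdd (Abelianization.commutator_subset_ker (Heis.aHom.comp (chi v v)) hn)

lemma commCoord_mul (u v : X) (g h : N X) :
    commCoord u v (g * h) = commCoord u v g + commCoord u v h + expSum u g * expSum v h := by
  simp [commCoord, chi_a, chi_b]

lemma commCoord_mul_of_mem {g : N X} (hg : g ∈ commutator (N X)) (u v : X) (h : N X) :
    commCoord u v (g * h) = commCoord u v g + commCoord u v h := by
  rw [commCoord_mul, expSum_eq_zero_of_mem hg, zero_mul, add_zero]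

lemma commCoord_commutatorElement (u v : X) (g h : N X) :
    commCoord u v ⁅g, h⁆ = expSum u g * expSum v h - expSum u h * expSum v g := by
  rw [commCoord, map_commutatorElement, Heis.commutatorElement_eq]
  simp only [chi_a, chi_b]

lemma commCoord_map_perm {ρ : Equiv.Perm X} {π : MulAut (N X)} (hπ : ∀ x, π (xb x) = xb (ρ x))
    (u v : X) (n : N X) : commCoord u v (π n) = commCoord (ρ.symm u) (ρ.symm v) n := by
  have : (chi u v).comp π.toMonoidHom = chi (ρ.symm u) (ρ.symm v) := N.hom_ext fun x => by
    simp [hπ, ← Equiv.eq_symm_apply]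
  exact congrArg Heis.c (DFunLike.congr_fun this n)

/-- The `(u, v)`-coordinate of `[x̄, z]` when `e` lists the exponent sums of `z`. -/
def twist (e : X → ℤ) (x u v : X) : ℤ := (if x = u then e v else 0) - (if x = v then e u else 0)

lemma commCoord_xb_commutatorElement (x u v : X) (z : N X) :
    commCoord u v ⁅xb x, z⁆ = twist (expSum · z) x u v := by
  rw [commCoord_commutatorElement, twist]
  simp only [expSum_xb]
  split_ifs <;> ring

lemma exists_expSum_eq_indicator (T : Finset X) :
    ∃ z : N X, ∀ v, expSum v z = if v ∈ T then 1 else 0 := by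
  induction T using Finset.induction_on with
  | empty => exact ⟨1, fun v => by simpa using expSum_mul v 1 1⟩
  | insert a T haT ih =>
    obtain ⟨z, hz⟩ := ih
    refine ⟨xb a * z, fun v => ?_⟩
    rw [expSum_mul, expSum_xb, hz]
    by_cases hv : v = a
    · subst hv; simp [haT]
    · simp [hv, Ne.symm hv]

lemma commCoord_basicProd (u v : X) (μ : (X × X) →₀ ℤ) :
    commCoord u v (basicProd μ : N X) = μ (u, v) - μ (v, u) := by
  induction μ using Finsupp.induction_linear with
  | zero => simp [basicProd, commCoord]
  | add μ ν hμ hν =>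
    rw [basicProd_add, Subgroup.coe_mul, commCoord_mul_of_mem (basicProd μ).2, hμ, hν]
    simp only [Finsupp.add_apply]
    ring
  | single p k =>
    let φ : commutator (N X) →* Multiplicative ℤ :=
      { toFun := fun n => .ofAdd (commCoord u v n)
        map_one' := by simp [commCoord]
        map_mul' := fun m n => by simp [commCoord_mul_of_mem m.2] }
    have hpow : commCoord u v ((basicComm p ^ k : commutator (N X)) : N X) =
        k * commCoord u v ⁅xb p.1, xb p.2⁆ :=
      congrArg Multiplicative.toAdd (map_zpow φ (basicComm p) k)
    rw [basicProd, Finsupp.prod_single_index (zpow_zero _), hpow, commCoord_commutatorElement]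
    obtain ⟨a, b⟩ := p
    simp only [expSum_xb, Finsupp.single_apply, Prod.ext_iff]
    split_ifs <;> simp_all

lemma commCoord_swap {n : N X} (hn : n ∈ commutator (N X)) (u v : X) :
    commCoord v u n = -commCoord u v n := by
  let := IsWellOrder.linearOrder (WellOrderingRel (α := X))
  obtain ⟨μ, -, rfl⟩ := exists_eq_basicProd hn
  rw [commCoord_basicProd, commCoord_basicProd, neg_sub]

lemma exists_finset_commCoord_eq_zero {n : N X} (hn : n ∈ commutator (N X)) :
    ∃ S : Finset X, ∀ u v, u ∉ S → commCoord u v n = 0 := by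
  let := IsWellOrder.linearOrder (WellOrderingRel (α := X))
  obtain ⟨μ, -, rfl⟩ := exists_eq_basicProd hn
  refine ⟨μ.support.image Prod.fst ∪ μ.support.image Prod.snd, fun u v hu => ?_⟩
  simp only [Finset.mem_union, Finset.mem_image, Finsupp.mem_support_iff, not_or,
    not_exists, not_and, Prod.exists] at hu
  rw [commCoord_basicProd, not_not.mp fun h => hu.1 u v h rfl,
    not_not.mp fun h => hu.2 v u h rfl, sub_zero]

lemma exists_eq_mul_self_of_two_dvd {n : N X} (hn : n ∈ commutator (N X))
    (h2 : ∀ u v, u ≠ v → 2 ∣ commCoord u v n) : ∃ w ∈ commutator (N X), n = w * w := by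
  let := IsWellOrder.linearOrder (WellOrderingRel (α := X))
  obtain ⟨μ, hμ, rfl⟩ := exists_eq_basicProd hn
  have hμ2 : ∀ p, 2 ∣ μ p := fun ⟨u, v⟩ => by
    by_cases huv : u < v
    · have hvu : μ (v, u) = 0 := (Finsupp.mem_supported' _ _).mp hμ (v, u) (lt_asymm huv)
      simpa [commCoord_basicProd, hvu] using h2 u v huv.ne
    · rw [(Finsupp.mem_supported' _ _).mp hμ (u, v) huv]; exact dvd_zero 2
  let ν : (X × X) →₀ ℤ := μ.mapRange (· / 2) (Int.zero_ediv 2)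
  refine ⟨basicProd ν, (basicProd ν).2, ?_⟩
  rw [← Subgroup.coe_mul, ← basicProd_add]
  congr 2
  ext p
  obtain ⟨k, hk⟩ := hμ2 p
  simp [ν, hk]
  omega

lemma ASym.two_dvd_commCoord_inversionDefect_sub {θ : MulAut (N X)} (hθ : ASym θ)
    {ρ : Equiv.Perm X} {π : MulAut (N X)} (hπ : ∀ x, π (xb x) = xb (ρ x)) {α : MulAut (N X)}
    (hα : IA α)
    (h : hhat _ π * hhat _ θ * (hhat _ π)⁻¹ * (hhat _ θ)⁻¹ = hhat _ (α ^ 2)) :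
    ∃ e : X → ℤ, ∀ x u v, 2 ∣ commCoord (ρ.symm u) (ρ.symm v) (inversionDefect θ (ρ.symm x)) -
      commCoord u v (inversionDefect θ x) - twist e x u v := by
  obtain ⟨z, hz⟩ := hθ.exists_map_inversionDefect_eq hπ hα h
  refine ⟨(expSum · z), fun x u v => ?_⟩
  obtain ⟨d, hd, hxd⟩ := hz x
  have hxz : ⁅xb x, z⁆ ∈ commutator (N X) := commutator_mem_commutator (mem_top _) (mem_top _)
  rw [← commCoord_map_perm hπ, hxd, commCoord_mul_of_mem (mul_mem hxz (hθ.inversionDefect_mem x)),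
    commCoord_mul_of_mem hxz, commCoord_mul_of_mem hd, commCoord_xb_commutatorElement]
  exact ⟨commCoord u v d, by ring⟩

section Parity

variable [Infinite X] {L : X → X → X → ℤ}
  (hsupp : ∀ x, ∃ S : Finset X, ∀ u v, u ∉ S → L x u v = 0)
  (hswap : ∀ a b : X, ∃ e : X → ℤ, ∀ x u v,
    2 ∣ L (Equiv.swap a b x) (Equiv.swap a b u) (Equiv.swap a b v) - L x u v - twist e x u v)
include hswap

include hsupp in
lemma two_dvd_of_ne_of_ne {x u v : X} (hxu : x ≠ u) (hxv : x ≠ v) : 2 ∣ L x u v := by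
  obtain ⟨S, hS⟩ := hsupp x
  obtain ⟨u', hu'⟩ := Infinite.exists_notMem_finset (insert x S)
  rw [Finset.mem_insert, not_or] at hu'
  obtain ⟨e, he⟩ := hswap u u'
  have := he x u v
  rw [Equiv.swap_apply_of_ne_of_ne hxu (Ne.symm hu'.1), Equiv.swap_apply_left, hS u' _ hu'.2,
    twist, if_neg hxu, if_neg hxv] at this
  simpa using this

lemma two_dvd_sub_of_ne {x x' y : X} (hx : y ≠ x) (hx' : y ≠ x') :
    2 ∣ L x x y - L x' x' y := by
  obtain ⟨x'', hx''⟩ := Infinite.exists_notMem_finset {x, x', y}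
  simp only [Finset.mem_insert, Finset.mem_singleton, not_or] at hx''
  obtain ⟨hx''x, hx''x', hx''y⟩ := hx''
  obtain ⟨e, he⟩ := hswap x x'
  have h₁ := he x'' x'' y
  have h₂ := he x x y
  rw [Equiv.swap_apply_of_ne_of_ne hx''x hx''x', Equiv.swap_apply_of_ne_of_ne hx hx', twist,
    if_pos rfl, if_neg hx''y] at h₁
  rw [Equiv.swap_apply_left, Equiv.swap_apply_of_ne_of_ne hx hx', twist, if_pos rfl,
    if_neg hx.symm] at h₂
  omega

include hsupp in
theorem exists_finset_two_dvd_add_twist (hanti : ∀ x u v, L x v u = -L x u v) :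
    ∃ T : Finset X, ∀ x u v, u ≠ v →
      2 ∣ L x u v + twist (fun w => if w ∈ T then 1 else 0) x u v := by
  choose p hp using fun y : X => exists_ne y
  have hr : ∀ x y, x ≠ y → 2 ∣ L x x y - L (p y) (p y) y := fun x y hxy =>
    two_dvd_sub_of_ne hswap hxy.symm (hp y).symm
  obtain ⟨x₀⟩ := ‹Infinite X›.nonempty
  obtain ⟨S₀, hS₀⟩ := hsupp x₀
  -- modulo 2, `L x x y` does not depend on `x ≠ y`; `T` collects the `y` where it is odd
  refine ⟨(insert x₀ S₀).filter fun y => ¬ 2 ∣ L (p y) (p y) y, ?_⟩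
  have hT : ∀ y, 2 ∣ L (p y) (p y) y -
      if y ∈ (insert x₀ S₀).filter fun y => ¬ 2 ∣ L (p y) (p y) y then 1 else 0 := by
    intro y
    by_cases hy : y ∈ insert x₀ S₀
    · simp only [Finset.mem_filter, hy, true_and]
      split_ifs <;> omega
    · rw [Finset.mem_insert, not_or] at hy
      have h₀ : L x₀ x₀ y = 0 := by rw [← neg_eq_zero, ← hanti, hS₀ y x₀ hy.2]
      have := hr x₀ y (Ne.symm hy.1)
      simp only [Finset.mem_filter, Finset.mem_insert, hy, false_or, false_and, if_false]
      omega
  intro x u v huv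
  by_cases hxu : x = u
  · subst hxu
    have := hr x v huv
    have := hT v
    simp only [twist, if_neg huv]
    split_ifs at * <;> omega
  by_cases hxv : x = v
  · subst hxv
    have := hr x u (Ne.symm huv)
    have := hT u
    have := hanti x u x
    simp only [twist, if_neg hxu]
    split_ifs at * <;> omega
  · rw [twist, if_neg hxu, if_neg hxv, sub_zero, add_zero]
    exact two_dvd_of_ne_of_ne hsupp hswap hxu hxv

end Parity

end FreeNilp

open FreeNilp

/-- If `t ∈ Out N` is an A-symmetry commuting, modulo `ĥ(K²)`, with
the image of every permutational automorphism of `N`, then `t` is a symmetry: it is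
induced by an automorphism `θ` of `N` inverting all elements of some basis `B` of `N`. -/
theorem stmt14 (X : Type*) [Infinite X] (t : Out (N X)) (ht : ASymO t)
    (hcomm : ∀ (ρ : Equiv.Perm X) (π : MulAut (N X)),
      (∀ x : X, π (xb x) = xb (ρ x)) →
      ∃ α : MulAut (N X), IA α ∧
        hhat (N X) π * t * (hhat (N X) π)⁻¹ * t⁻¹ = hhat (N X) (α ^ 2)) :
    ∃ (θ : MulAut (N X)) (B : Set (N X)), IsBasisN B ∧
      (∀ b ∈ B, θ b = b⁻¹) ∧ hhat (N X) θ = t := by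
  classical
  obtain ⟨θ, rfl, hθ⟩ := ht
  have hswap (a b : X) : ∃ e : X → ℤ, ∀ x u v,
      2 ∣ commCoord (Equiv.swap a b u) (Equiv.swap a b v) (inversionDefect θ (Equiv.swap a b x)) -
        commCoord u v (inversionDefect θ x) - twist e x u v := by
    obtain ⟨π, hπ⟩ := N.exists_mulAut_apply_xb_perm (Equiv.swap a b)
    obtain ⟨α, hα, h⟩ := hcomm _ π hπ
    simpa only [Equiv.symm_swap] using hθ.two_dvd_commCoord_inversionDefect_sub hπ hα h
  obtain ⟨T, hT⟩ := exists_finset_two_dvd_add_twist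
    (fun x => exists_finset_commCoord_eq_zero (hθ.inversionDefect_mem x)) hswap
    (fun x => commCoord_swap (hθ.inversionDefect_mem x))
  obtain ⟨z, hz⟩ := exists_expSum_eq_indicator T
  have hsqrt (x : X) : ∃ w ∈ commutator (N X),
      inversionDefect (θ * MulAut.conj z⁻¹) x = w * w := by
    refine exists_eq_mul_self_of_two_dvd ((hθ.mul_conj z⁻¹).inversionDefect_mem x) fun u v huv => ?_
    rw [hθ.inversionDefect_mul_conj,
      commutatorElement_inv_inv N.commutatorElement_commutatorElement, commCoord_mul_of_mem (hθ.inversionDefect_mem x), commCoord_xb_commutatorElement, funext hz]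
    exact hT x u v huv
  choose w hw hsq using hsqrt
  obtain ⟨B, hB, hinv⟩ := (hθ.mul_conj z⁻¹).exists_basis_of_inversionDefect_eq_mul_self hw hsq
  exact ⟨_, B, hB, hinv, hhat_mul_conj θ z⁻¹⟩
end
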